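/- arXiv:2505.00349 — 2 statements merged into one kernel-verified Lean document; each statement's English description precedes it below -/
import Mathlib

section
/- Let $0<\mu\le L$, $\lambda>0$, $m\le n$, $r\in[m]$. Suppose $x,g,y,v\in\mathbb{R}^m$ satisfy: $x_i>0$ and $g_i=\lambda$ for $i\in[r]$; $x_i=0$ and $g_i\in[0,\lambda+L\min_{j\in[r]}x_j]$ for $i\in[m]\setminus[r]$; $y_i\ge 0$ and $v_i\ge 0$ for all $i$; and $x,y$ are sorted in descending order. Define $\bar X = \widetilde{\mathrm{Diag}}(x)$, $\bar G = \widetilde{\mathrm{Diag}}(g)\in\mathbb{R}^{m\times n}$, and (assuming $\bar G + \mu\bar X = G^* + \mu X^*$ where $X^* = \widetilde{\mathrm{Diag}}(y)$, $G^* = \widetilde{\mathrm{Diag}}(v)$) the quadratic function $h(X) = \frac{L}{2}\sum_{i=1}^m\sum_{j\neq i}X_{ij}^2 + \frac{\mu}{2}\sum_{i=1}^m(X_{ii}-\bar X_{ii})^2 - \langle\bar G, X\rangle$. Then $h$ is $\mu$-strongly convex, $\nabla h$ is $L$-Lipschitz, $\nabla h(\bar X) = -\bar G$, and $\nabla h(X^*)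 = -G^*$. -/
open Matrix Finset

attribute [local instance] Matrix.frobeniusNormedAddCommGroup Matrix.frobeniusNormedSpace

def mdot {m n : ℕ} (A B : Matrix (Fin m) (Fin n) ℝ) : ℝ := ∑ i, ∑ j, A i j * B i j

noncomputable def frob {m n : ℕ} (A : Matrix (Fin m) (Fin n) ℝ) : ℝ := Real.sqrt (mdot A A)

def IsOrth {k : ℕ} (R : Matrix (Fin k) (Fin k) ℝ) : Prop := Rᵀ * R = 1

def rdg (a b : ℕ) {c : ℕ} (x : Fin c → ℝ) : Matrix (Fin a) (Fin b) ℝ :=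
  Matrix.of fun i j => if h : (i : ℕ) = (j : ℕ) ∧ (i : ℕ) < c then x ⟨i, h.2⟩ else 0

noncomputable def descSort {k : ℕ} (f : Fin k → ℝ) : Fin k → ℝ := fun i => f (Tuple.sort f i.rev)

noncomputable def sigCol {a r : ℕ} (X : Matrix (Fin a) (Fin r) ℝ) : Fin r → ℝ :=
  descSort fun i => Real.sqrt ((Matrix.isHermitian_conjTranspose_mul_self X).eigenvalues i)

noncomputable def sigRow {a b : ℕ} (X : Matrix (Fin a) (Fin b) ℝ) : Fin a → ℝ :=
  descSort fun i => Real.sqrt ((Matrix.isHermitian_mul_conjTranspose_self X).eigenvalues i)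

noncomputable def toDual {m n : ℕ} (G : Matrix (Fin m) (Fin n) ℝ) :
    Matrix (Fin m) (Fin n) ℝ →L[ℝ] ℝ :=
  LinearMap.toContinuousLinearMap
    { toFun := fun Y => mdot G Y
      map_add' := fun Y Z => by
        simp [mdot, Matrix.add_apply, mul_add, Finset.sum_add_distrib]
      map_smul' := fun c Y => by
        simp [mdot, Matrix.smul_apply, smul_eq_mul, Finset.mul_sum, mul_left_comm] }

noncomputable def enorm2 {k : ℕ} (v : Fin k → ℝ) : ℝ := Real.sqrt (∑ i, v i ^ 2)

def subdiff {m n : ℕ} (f : Matrix (Fin m) (Fin n) ℝ → ℝ) (X : Matrix (Fin m) (Fin n) ℝ) :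
    Set (Matrix (Fin m) (Fin n) ℝ) := {G | ∀ Y, f X + mdot G (Y - X) ≤ f Y}


/-! With weight `c = μ` on the diagonal and `L` off it, `h X = ∑ᵢⱼ cᵢⱼ/2 (Xᵢⱼ - X̄ᵢⱼ)² - ⟨Ḡ, X⟩`
separates into one-variable quadratics, so `∇h X = c ⊙ (X - X̄) - Ḡ`. Since `μ ≤ cᵢⱼ ≤ L`,
subtracting `μ/2 ‖X‖²` keeps every summand convex, and `‖c ⊙ Z‖ ≤ L ‖Z‖`. At `X̄` the gradient is
`-Ḡ`; at `X*` the difference `X* - X̄` is diagonal, so `∇h X* = μ (X* - X̄) - Ḡ = -G*` by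
`Ḡ + μ X̄ = G* + μ X*`. -/

theorem convexOn_sum_entries {ι κ : Type*} [Fintype ι] [Fintype κ] (f : ι → κ → ℝ → ℝ)
    (hf : ∀ i j, ConvexOn ℝ Set.univ (f i j)) :
    ConvexOn ℝ Set.univ (fun X : Matrix ι κ ℝ => ∑ i, ∑ j, f i j (X i j)) := by
  refine ⟨convex_univ, fun X _ Y _ a b ha hb hab => ?_⟩
  simp only [smul_eq_mul, Matrix.add_apply, Matrix.smul_apply, mul_sum, ← sum_add_distrib]
  exact sum_le_sum fun i _ => sum_le_sum fun j _ =>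
    (hf i j).2 (Set.mem_univ _) (Set.mem_univ _) ha hb hab

theorem convexOn_weightedSq_sub_sq {mu c : ℝ} (hc : mu ≤ c) (a b : ℝ) :
    ConvexOn ℝ Set.univ (fun t : ℝ => c / 2 * (t - a) ^ 2 - b * t - mu / 2 * t ^ 2) := by
  refine ⟨convex_univ, fun s _ t _ p q hp hq hpq => ?_⟩
  obtain rfl : q = 1 - p := by linarith
  simp only [smul_eq_mul]
  nlinarith [mul_nonneg (mul_nonneg (sub_nonneg.2 hc) hp) (mul_nonneg hq (sq_nonneg (s - t)))]

theorem Matrix.hadamard_sub {ι κ α : Type*} [NonUnitalNonAssocRing α] (A B C : Matrix ι κ α) :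
    A ⊙ (B - C) = A ⊙ B - A ⊙ C :=
  ext fun _ _ => mul_sub _ _ _

section

variable {m n : ℕ}

noncomputable def weightedQuad (c A B X : Matrix (Fin m) (Fin n) ℝ) : ℝ :=
  ∑ i, ∑ j, (c i j / 2 * (X i j - A i j) ^ 2 - B i j * X i j)

theorem convexOn_weightedQuad_sub {c : Matrix (Fin m) (Fin n) ℝ} {mu : ℝ}
    (hc : ∀ i j, mu ≤ c i j) (A B : Matrix (Fin m) (Fin n) ℝ) :
    ConvexOn ℝ Set.univ (fun X => weightedQuad c A B X - mu / 2 * mdot X X) := by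
  have hsplit : (fun X => weightedQuad c A B X - mu / 2 * mdot X X) = fun X =>
      ∑ i, ∑ j, (c i j / 2 * (X i j - A i j) ^ 2 - B i j * X i j - mu / 2 * X i j ^ 2) := by
    funext X
    simp only [weightedQuad, mdot, mul_sum, ← sum_sub_distrib, sq]
  rw [hsplit]
  exact convexOn_sum_entries _ fun i j => convexOn_weightedSq_sub_sq (hc i j) (A i j) (B i j)

theorem toDual_eq_sum (G : Matrix (Fin m) (Fin n) ℝ) :
    toDual G = ∑ i, ∑ j, G i j • (entryLinearMap ℝ ℝ i j).toContinuousLinearMap := by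
  ext Y
  simp [toDual, mdot]

theorem hasFDerivAt_weightedQuad (c A B X : Matrix (Fin m) (Fin n) ℝ) :
    HasFDerivAt (weightedQuad c A B) (toDual (c ⊙ (X - A) - B)) X := by
  rw [toDual_eq_sum]
  refine HasFDerivAt.fun_sum fun i _ => HasFDerivAt.fun_sum fun j _ => ?_
  have hscalar : HasDerivAt (fun t : ℝ => c i j / 2 * (t - A i j) ^ 2 - B i j * t)
      (c i j * (X i j - A i j) - B i j) (X i j) := by
    refine ((((hasDerivAt_id _).sub_const (A i j)).pow 2).const_mul (c i j / 2) |>.sub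
      ((hasDerivAt_id _).const_mul (B i j))).congr_deriv ?_
    simp only [id_eq]
    ring
  exact hscalar.comp_hasFDerivAt X
    (entryLinearMap ℝ ℝ i j).toContinuousLinearMap.hasFDerivAt

theorem frob_hadamard_le {c : Matrix (Fin m) (Fin n) ℝ} {K : ℝ} (hK : 0 ≤ K)
    (hc : ∀ i j, |c i j| ≤ K) (Z : Matrix (Fin m) (Fin n) ℝ) :
    frob (c ⊙ Z) ≤ K * frob Z := by
  have hsq : mdot (c ⊙ Z) (c ⊙ Z) ≤ K ^ 2 * mdot Z Z := by
    simp only [mdot, Matrix.hadamard_apply, mul_sum]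
    refine sum_le_sum fun i _ => sum_le_sum fun j _ => ?_
    have : c i j ^ 2 ≤ K ^ 2 := sq_le_sq' (abs_le.1 (hc i j)).1 (abs_le.1 (hc i j)).2
    nlinarith [mul_self_nonneg (Z i j)]
  calc frob (c ⊙ Z) ≤ Real.sqrt (K ^ 2 * mdot Z Z) := Real.sqrt_le_sqrt hsq
    _ = K * frob Z := by rw [Real.sqrt_mul (sq_nonneg K), Real.sqrt_sq hK, frob]

theorem rdg_apply (x : Fin m → ℝ) (i : Fin m) (j : Fin n) :
    rdg m n x i j = if (i : ℕ) = j then x i else 0 := by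
  by_cases hij : (i : ℕ) = j <;> simp [rdg, hij]

def diagWeight (d e : ℝ) : Matrix (Fin m) (Fin n) ℝ :=
  Matrix.of fun i j => if (i : ℕ) = j then d else e

theorem le_diagWeight {d e : ℝ} (hde : d ≤ e) (i : Fin m) (j : Fin n) :
    d ≤ diagWeight d e i j := by
  simp only [diagWeight, of_apply]; split_ifs <;> simp [hde]

theorem abs_diagWeight_le {d e : ℝ} (hd : 0 ≤ d) (hde : d ≤ e) (i : Fin m) (j : Fin n) :
    |diagWeight d e i j| ≤ e := by
  simp only [diagWeight, of_apply]; split_ifs <;> simp [abs_of_nonneg, hd, hde, hd.trans hde]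

theorem diagWeight_hadamard_rdg {c : ℕ} (d e : ℝ) (w : Fin c → ℝ) :
    diagWeight d e ⊙ rdg m n w = d • rdg m n w := by
  ext i j
  simp only [diagWeight, rdg, Matrix.hadamard_apply, Matrix.of_apply, Matrix.smul_apply,
    smul_eq_mul]
  split_ifs <;> simp_all

theorem weightedQuad_diagWeight_rdg (hmn : m ≤ n) (d e : ℝ) (x : Fin m → ℝ)
    (B X : Matrix (Fin m) (Fin n) ℝ) :
    weightedQuad (diagWeight d e) (rdg m n x) B X =
      e / 2 * (∑ i : Fin m, ∑ j : Fin n, if (i : ℕ) = (j : ℕ) then 0 else X i j ^ 2)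
      + d / 2 * (∑ i : Fin m, (X i ⟨(i : ℕ), lt_of_lt_of_le i.isLt hmn⟩ - x i) ^ 2)
      - mdot B X := by
  have hrow : ∀ i : Fin m, ∑ j, diagWeight d e i j / 2 * (X i j - rdg m n x i j) ^ 2 =
      e / 2 * (∑ j : Fin n, if (i : ℕ) = (j : ℕ) then 0 else X i j ^ 2)
        + d / 2 * (X i ⟨(i : ℕ), lt_of_lt_of_le i.isLt hmn⟩ - x i) ^ 2 := by
    intro i
    have hentry : ∀ j : Fin n, diagWeight d e i j / 2 * (X i j - rdg m n x i j) ^ 2 =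
        e / 2 * (if (i : ℕ) = (j : ℕ) then 0 else X i j ^ 2)
          + if ⟨(i : ℕ), lt_of_lt_of_le i.isLt hmn⟩ = j then d / 2 * (X i j - x i) ^ 2 else 0 := by
      intro j
      by_cases hij : (i : ℕ) = j
      · obtain rfl : ⟨(i : ℕ), lt_of_lt_of_le i.isLt hmn⟩ = j := Fin.ext hij
        simp [diagWeight, rdg_apply]
      · simp [diagWeight, rdg_apply, hij, Fin.ext_iff]
    rw [sum_congr rfl fun j _ => hentry j, sum_add_distrib, ← mul_sum, sum_ite_eq]
    simp
  simp only [weightedQuad, mdot, sum_sub_distrib, hrow, sum_add_distrib, ← mul_sum]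

end

theorem counterexample_h_properties_general (m n : ℕ) (hmn : m ≤ n)
    (mu L : ℝ) (hmu : 0 < mu) (hL : mu ≤ L)
    (x g y v : Fin m → ℝ)
    (hbal : rdg m n g + mu • rdg m n x = rdg m n v + mu • rdg m n y)
    (h : Matrix (Fin m) (Fin n) ℝ → ℝ)
    (hdef : ∀ X, h X =
      L / 2 * (∑ i : Fin m, ∑ j : Fin n, if (i : ℕ) = (j : ℕ) then 0 else X i j ^ 2)
      + mu / 2 * (∑ i : Fin m, (X i ⟨(i : ℕ), lt_of_lt_of_le i.isLt hmn⟩ - x i) ^ 2)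
      - mdot (rdg m n g) X) :
    ConvexOn ℝ Set.univ (fun X => h X - mu / 2 * mdot X X) ∧
    ∃ G : Matrix (Fin m) (Fin n) ℝ → Matrix (Fin m) (Fin n) ℝ,
      (∀ X, HasFDerivAt h (toDual (G X)) X) ∧
      (∀ X Y, frob (G X - G Y) ≤ L * frob (X - Y)) ∧
      G (rdg m n x) = -(rdg m n g) ∧
      G (rdg m n y) = -(rdg m n v) := by
  obtain rfl : h = weightedQuad (diagWeight mu L) (rdg m n x) (rdg m n g) :=
    funext fun X => (hdef X).trans (weightedQuad_diagWeight_rdg hmn mu L x _ X).symm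
  refine ⟨convexOn_weightedQuad_sub (le_diagWeight hL) _ _,
    fun X => diagWeight mu L ⊙ (X - rdg m n x) - rdg m n g,
    hasFDerivAt_weightedQuad _ _ _, fun X Y => ?_, by simp, ?_⟩
  · rw [sub_sub_sub_cancel_right, ← Matrix.hadamard_sub, sub_sub_sub_cancel_right]
    exact frob_hadamard_le (hmu.le.trans hL) (abs_diagWeight_le hmu.le hL) _
  · show diagWeight mu L ⊙ (rdg m n y - rdg m n x) - rdg m n g = -rdg m n v
    rw [Matrix.hadamard_sub, diagWeight_hadamard_rdg, diagWeight_hadamard_rdg]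
    linear_combination (norm := module) -hbal

theorem counterexample_h_properties (m n r : ℕ) (hr : 1 ≤ r) (hrm : r ≤ m) (hmn : m ≤ n)
    (mu L lam : ℝ) (hmu : 0 < mu) (hL : mu ≤ L) (hlam : 0 < lam)
    (x g y v : Fin m → ℝ)
    (hxpos : ∀ i : Fin m, (i : ℕ) < r → 0 < x i)
    (hglam : ∀ i : Fin m, (i : ℕ) < r → g i = lam)
    (hxzero : ∀ i : Fin m, r ≤ (i : ℕ) → x i = 0)
    (hgpos : ∀ i : Fin m, r ≤ (i : ℕ) → 0 ≤ g i)
    (hgub : ∀ i : Fin m, r ≤ (i : ℕ) → ∀ j : Fin m, (j : ℕ) < r → g i ≤ lam + L * x j)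
    (hypos : ∀ i, 0 ≤ y i) (hvpos : ∀ i, 0 ≤ v i)
    (hxdesc : Antitone x) (hydesc : Antitone y)
    (hbal : rdg m n g + mu • rdg m n x = rdg m n v + mu • rdg m n y)
    (h : Matrix (Fin m) (Fin n) ℝ → ℝ)
    (hdef : ∀ X, h X =
      L / 2 * (∑ i : Fin m, ∑ j : Fin n, if (i : ℕ) = (j : ℕ) then 0 else X i j ^ 2)
      + mu / 2 * (∑ i : Fin m, (X i ⟨(i : ℕ), lt_of_lt_of_le i.isLt hmn⟩ - x i) ^ 2)
      - mdot (rdg m n g) X) :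
    ConvexOn ℝ Set.univ (fun X => h X - mu / 2 * mdot X X) ∧
    ∃ G : Matrix (Fin m) (Fin n) ℝ → Matrix (Fin m) (Fin n) ℝ,
      (∀ X, HasFDerivAt h (toDual (G X)) X) ∧
      (∀ X Y, frob (G X - G Y) ≤ L * frob (X - Y)) ∧
      G (rdg m n x) = -(rdg m n g) ∧
      G (rdg m n y) = -(rdg m n v) :=
  counterexample_h_properties_general m n hmn mu L hmu hL x g y v hbal h hdef
end

section
/- Let $0<\mu\le L$, $\lambda>0$, $r\in[m]$, $m\le n$, and let $x\in\mathbb{R}^m$ satisfy $x_1\ge\cdots\ge x_r>0$ and $x_i=0$ for $i>r$, and $g\in\mathbb{R}^m$ satisfy $g_i=\lambda$ for $i\in[r]$ and $g_i\in[0,\lambda+Lx_r]$ for $i>r$. Define $h(X) = \frac{L}{2}\sum_{i=1}^m\sum_{j\neq i}X_{ij}^2 + \frac{\mu}{2}\sum_{i=1}^m(X_{ii}-x_i)^2 - \langle\widetilde{\mathrm{Diag}}(g), X\rangle$ and $F_r(U,V) = h(UV^\top)+\frac{\lambda}{2}(\|U\|_F^2+\|V\|_F^2)$. Then $(\bar U,\bar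 V)$ with $\bar U = \widetilde{\mathrm{Diag}}(\sqrt{x_1},\dots,\sqrt{x_r})\in\mathbb{R}^{m\times r}$ and $\bar V = \widetilde{\mathrm{Diag}}(\sqrt{x_1},\dots,\sqrt{x_r})\in\mathbb{R}^{n\times r}$ is a second-order stationary point of $F_r$. -/
open Matrix Finset

attribute [local instance] Matrix.frobeniusNormedAddCommGroup Matrix.frobeniusNormedSpace

/-!
Write `F_r(U, V) = q(UVᵀ - X̄) - ⟨G, UVᵀ⟩ + λ/2 (‖U‖² + ‖V‖²)` with `X̄ = Diag x`, `G = Diag g` and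
`q(Y) = ∑ W_ij Y_ij²`, `W` being `μ/2` on the diagonal and `L/2` off it. Since `Ū V̄ᵀ = X̄`, the
gradient of `h` at `X̄` is `-G`, so stationarity amounts to `G V̄ = λ Ū` and `Gᵀ Ū = λ V̄`, which
hold because `g_i = λ` for `i ≤ r`. In a direction `(A, B)` the Hessian is
`2 q(D) - 2 ⟨G, ABᵀ⟩ + λ (‖A‖² + ‖B‖²)` with `D = Ū Bᵀ + A V̄ᵀ`. Keeping only the two off-diagonal
blocks of `D` (rows `i > r`, columns `k ≤ r`, and their mirror images), whose entries are
`A_ik √x_k` and `√x_k B_ik`, bounds it below by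
`∑_{i,k} (λ + [i > r] L x_k)(A_ik² + B_ik²) - 2 g_i A_ik B_ik`, and every term is nonnegative
because `0 ≤ g_i ≤ λ + [i > r] L x_k` (for `i > r` through `g_i ≤ λ + L x_r` and `x_r ≤ x_k`).
-/

section SecondOrder

variable {E F G : Type*} [NormedAddCommGroup E] [NormedSpace ℝ E] [NormedAddCommGroup F]
  [NormedSpace ℝ F] [NormedAddCommGroup G] [NormedSpace ℝ G]

theorem hasFDerivAt_bilinear_diag (S : E →L[ℝ] E →L[ℝ] ℝ) (x : E) :
    HasFDerivAt (fun y => S y y) (S x + S.flip x) x := by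
  refine (S.hasFDerivAt_of_bilinear (hasFDerivAt_id x) (hasFDerivAt_id x)).congr_fderiv ?_
  ext y
  simp

theorem hasFDerivAt_quadratic (Q : G →L[ℝ] G →L[ℝ] ℝ) (ℓ : G →L[ℝ] ℝ) (X₀ X : G) :
    HasFDerivAt (fun Y => Q (Y - X₀) (Y - X₀) + ℓ Y) (Q (X - X₀) + Q.flip (X - X₀) + ℓ) X := by
  exact ((hasFDerivAt_bilinear_diag Q (X - X₀)).comp X ((hasFDerivAt_id X).sub_const X₀)).add
    ℓ.hasFDerivAt

theorem hasFDerivAt_quadratic_deriv (Q : G →L[ℝ] G →L[ℝ] ℝ) (ℓ : G →L[ℝ] ℝ) (X₀ X : G) :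
    HasFDerivAt (fun Y => Q (Y - X₀) + Q.flip (Y - X₀) + ℓ) (Q + Q.flip) X := by
  exact ((Q + Q.flip).hasFDerivAt.comp X ((hasFDerivAt_id X).sub_const X₀)).add_const ℓ

variable (b : E →L[ℝ] F →L[ℝ] G) (S : E × F →L[ℝ] E × F →L[ℝ] ℝ) {φ : G → ℝ}
  {φ' : G → G →L[ℝ] ℝ} {φ'' : G → G →L[ℝ] G →L[ℝ] ℝ}

theorem fderiv_comp_bilinear_add_diag (hφ : ∀ X, HasFDerivAt φ (φ' X) X) :
    fderiv ℝ (fun p : E × F => φ (b p.1 p.2) + S p p) =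
      fun p => (φ' (b p.1 p.2)).comp (b.deriv₂ p) + (S p + S.flip p) := by
  funext p
  exact (((hφ _).comp p (b.isBoundedBilinearMap.hasFDerivAt p)).add
    (hasFDerivAt_bilinear_diag S p)).fderiv

theorem fderiv_comp_bilinear_add_diag_apply (hφ : ∀ X, HasFDerivAt φ (φ' X) X) (p w : E × F) :
    fderiv ℝ (fun p : E × F => φ (b p.1 p.2) + S p p) p w =
      φ' (b p.1 p.2) (b.deriv₂ p w) + (S p w + S w p) := by
  simp [fderiv_comp_bilinear_add_diag b S hφ]

theorem fderiv_fderiv_comp_bilinear_add_diag_apply (hφ : ∀ X, HasFDerivAt φ (φ' X) X)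
    (hφ' : ∀ X, HasFDerivAt φ' (φ'' X) X) (p w : E × F) :
    fderiv ℝ (fderiv ℝ (fun p : E × F => φ (b p.1 p.2) + S p p)) p w w =
      φ'' (b p.1 p.2) (b.deriv₂ p w) (b.deriv₂ p w) + φ' (b p.1 p.2) (b.deriv₂ w w)
        + 2 * S w w := by
  rw [fderiv_comp_bilinear_add_diag b S hφ]
  have hφb : HasFDerivAt (fun q : E × F => φ' (b q.1 q.2))
      ((φ'' (b p.1 p.2)).comp (b.deriv₂ p)) p :=
    (hφ' _).comp p (b.isBoundedBilinearMap.hasFDerivAt p)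
  have hderiv : HasFDerivAt
      (fun q => (φ' (b q.1 q.2)).comp (b.deriv₂ q) + (S q + S.flip q)) _ p :=
    (hφb.clm_comp b.deriv₂.hasFDerivAt).add (S.hasFDerivAt.add S.flip.hasFDerivAt)
  rw [hderiv.fderiv]
  simp
  ring

end SecondOrder

section Reindex

variable {M : Type*} [AddCommMonoid M] {a b : ℕ}

theorem Fin.sum_castLE_of_eq_zero (h : a ≤ b) (f : Fin b → M)
    (hf : ∀ j : Fin b, a ≤ (j : ℕ) → f j = 0) : ∑ j, f j = ∑ k : Fin a, f (Fin.castLE h k) := by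
  refine (Fintype.sum_of_injective _ (Fin.castLE_injective h) _ _ (fun j hj => hf j ?_)
    fun _ => rfl).symm
  by_contra! hja
  exact hj ⟨⟨j, hja⟩, rfl⟩

theorem Fin.sum_castLE_le [Preorder M] [AddLeftMono M] (h : a ≤ b) {f : Fin b → M}
    (hf : ∀ j, 0 ≤ f j) : ∑ k : Fin a, f (Fin.castLE h k) ≤ ∑ j, f j :=
  (sum_map univ (Fin.castLEEmb h) f).symm.trans_le (sum_le_univ_sum_of_nonneg hf)

theorem Fin.sum_ite_val_eq (h : a ≤ b) (i : Fin a) (f : Fin b → M) :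
    ∑ j : Fin b, (if (i : ℕ) = j then f j else 0) = f (Fin.castLE h i) := by
  simp_rw [← Fin.val_castLE h i, Fin.val_inj]
  simp

end Reindex

section MatrixInner

variable {m n r : ℕ}

theorem mdot_comm (A B : Matrix (Fin m) (Fin n) ℝ) : mdot A B = mdot B A := by
  simp only [mdot, mul_comm]

theorem mdot_zero_left (B : Matrix (Fin m) (Fin n) ℝ) : mdot 0 B = 0 := by
  simp [mdot]

theorem mdot_add_right (A B C : Matrix (Fin m) (Fin n) ℝ) :
    mdot A (B + C) = mdot A B + mdot A C := by
  simp only [mdot, Matrix.add_apply, mul_add, sum_add_distrib]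

theorem mdot_smul_left (c : ℝ) (A B : Matrix (Fin m) (Fin n) ℝ) :
    mdot (c • A) B = c * mdot A B := by
  simp only [mdot, Matrix.smul_apply, smul_eq_mul, mul_sum, mul_assoc]

theorem mdot_hadamard_comm (W X Y : Matrix (Fin m) (Fin n) ℝ) :
    mdot (W ⊙ X) Y = mdot (W ⊙ Y) X := by
  simp only [mdot, hadamard_apply, mul_right_comm]

theorem mdot_mul_transpose_left (M : Matrix (Fin m) (Fin n) ℝ) (U : Matrix (Fin m) (Fin r) ℝ)
    (B : Matrix (Fin n) (Fin r) ℝ) : mdot M (U * Bᵀ) = mdot (Mᵀ * U) B := by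
  simp only [mdot, mul_apply, transpose_apply, mul_sum, sum_mul]
  rw [sum_comm]
  refine sum_congr rfl fun j _ => ?_
  rw [sum_comm]
  exact sum_congr rfl fun k _ => sum_congr rfl fun i _ => by ring

theorem mdot_mul_transpose_right (M : Matrix (Fin m) (Fin n) ℝ) (A : Matrix (Fin m) (Fin r) ℝ)
    (V : Matrix (Fin n) (Fin r) ℝ) : mdot M (A * Vᵀ) = mdot (M * V) A := by
  simp only [mdot, mul_apply, transpose_apply, mul_sum, sum_mul]
  refine sum_congr rfl fun i _ => ?_
  rw [sum_comm]
  exact sum_congr rfl fun k _ => sum_congr rfl fun j _ => by ring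

theorem mdot_mul_transpose_add_of_mul_eq_smul {G : Matrix (Fin m) (Fin n) ℝ}
    {U : Matrix (Fin m) (Fin r) ℝ} {V : Matrix (Fin n) (Fin r) ℝ} {c : ℝ}
    (hV : G * V = c • U) (hU : Gᵀ * U = c • V) (A : Matrix (Fin m) (Fin r) ℝ)
    (B : Matrix (Fin n) (Fin r) ℝ) :
    mdot G (U * Bᵀ + A * Vᵀ) = c * (mdot U A + mdot V B) := by
  rw [mdot_add_right, mdot_mul_transpose_left, mdot_mul_transpose_right, hU, hV, mdot_smul_left,
    mdot_smul_left]
  ring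

end MatrixInner

section RectDiag

variable {a b c d : ℕ}

theorem rdg_transpose (v : Fin c → ℝ) : (rdg a b v)ᵀ = rdg b a v := by
  ext i j
  simp only [rdg, transpose_apply, of_apply]
  split_ifs with h₁ h₂ h₂
  · exact congrArg v (Fin.ext h₁.1)
  · exact absurd ⟨h₁.1.symm, h₁.1 ▸ h₁.2⟩ h₂
  · exact absurd ⟨h₂.1.symm, h₂.1 ▸ h₂.2⟩ h₁
  · rfl

theorem rdg_smul (t : ℝ) (v : Fin c → ℝ) : rdg a b (t • v) = t • rdg a b v := by
  ext i j
  simp only [rdg, of_apply, Matrix.smul_apply, Pi.smul_apply]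
  split_ifs <;> simp

theorem rdg_comp_castLE {q : ℕ} (h : q ≤ c) {v : Fin c → ℝ}
    (hv : ∀ i : Fin c, q ≤ (i : ℕ) → v i = 0) :
    rdg a b (fun k : Fin q => v (Fin.castLE h k)) = rdg a b v := by
  ext i j
  simp only [rdg, of_apply]
  split_ifs with h₁ h₂ h₂
  · rfl
  · exact absurd ⟨h₁.1, h₁.2.trans_le h⟩ h₂
  · exact (hv _ (by simp; omega)).symm
  · rfl

theorem rdg_mul_apply (v : Fin c → ℝ) (M : Matrix (Fin b) (Fin d) ℝ) (i : Fin a) (j : Fin d) :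
    (rdg a b v * M) i j =
      if h : (i : ℕ) < b ∧ (i : ℕ) < c then v ⟨i, h.2⟩ * M ⟨i, h.1⟩ j else 0 := by
  rw [mul_apply]
  split_ifs with h
  · rw [sum_eq_single ⟨i, h.1⟩]
    · simp [rdg, h.2]
    · intro k _ hk
      simpa [rdg] using fun hp _ => absurd (Fin.ext hp.symm) hk
    · simp
  · refine sum_eq_zero fun k _ => ?_
    simpa [rdg] using fun (hp : (i : ℕ) = k) hq => absurd ⟨hp ▸ k.isLt, hq⟩ h

theorem mul_rdg_apply (M : Matrix (Fin a) (Fin b) ℝ) (v : Fin c → ℝ) (i : Fin a) (j : Fin d) :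
    (M * rdg b d v) i j =
      if h : (j : ℕ) < b ∧ (j : ℕ) < c then M i ⟨j, h.1⟩ * v ⟨j, h.2⟩ else 0 := by
  rw [← transpose_apply (M * _), transpose_mul, rdg_transpose, rdg_mul_apply]
  simp [mul_comm]

theorem rdg_mul_rdg {p q : ℕ} (hqp : q ≤ p) (hqb : q ≤ b) (u : Fin p → ℝ) (v : Fin q → ℝ) :
    rdg a b u * rdg b d v = rdg a d fun k => u (Fin.castLE hqp k) * v k := by
  ext i j
  rw [rdg_mul_apply]
  simp only [rdg, of_apply]
  split_ifs <;> first | rfl | omega | simp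

theorem rdg_mul_rdg_eq_smul {p q : ℕ} (hqp : q ≤ p) (hqb : q ≤ b) {u : Fin p → ℝ} {t : ℝ}
    (hu : ∀ k : Fin q, u (Fin.castLE hqp k) = t) (v : Fin q → ℝ) :
    rdg a b u * rdg b d v = t • rdg a d v := by
  rw [rdg_mul_rdg hqp hqb, ← rdg_smul]
  congr 1
  funext k
  simp [hu]

theorem mdot_rdg (hca : c ≤ a) (hcb : c ≤ b) (v : Fin c → ℝ) (Z : Matrix (Fin a) (Fin b) ℝ) :
    mdot (rdg a b v) Z = ∑ k, v k * Z (Fin.castLE hca k) (Fin.castLE hcb k) := by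
  rw [mdot, ← Fintype.sum_prod_type']
  refine (Fintype.sum_of_injective (fun k => (Fin.castLE hca k, Fin.castLE hcb k)) ?_ _ _ ?_
    fun k => by simp [rdg]).symm
  · intro k l hkl
    exact Fin.castLE_injective hca (congrArg Prod.fst hkl)
  · rintro ⟨i, j⟩ hij
    simpa [rdg] using fun hp hq => absurd ⟨⟨i, hq⟩, Prod.ext (Fin.ext rfl) (Fin.ext hp)⟩ hij

end RectDiag

def diagOffDiag (m n : ℕ) (a b : ℝ) : Matrix (Fin m) (Fin n) ℝ :=
  of fun i j => if (i : ℕ) = j then a else b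

theorem offDiag_sq_add_diag_sq_eq {m n : ℕ} (hmn : m ≤ n) (L mu : ℝ) (x : Fin m → ℝ)
    (X : Matrix (Fin m) (Fin n) ℝ) :
    L / 2 * (∑ i : Fin m, ∑ j : Fin n, if (i : ℕ) = (j : ℕ) then 0 else X i j ^ 2)
      + mu / 2 * (∑ i : Fin m, (X i ⟨i, i.isLt.trans_le hmn⟩ - x i) ^ 2)
      = mdot (diagOffDiag m n (mu / 2) (L / 2) ⊙ (X - rdg m n x)) (X - rdg m n x) := by
  have hentry : ∀ i j, (diagOffDiag m n (mu / 2) (L / 2) ⊙ (X - rdg m n x)) i j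
        * (X - rdg m n x) i j
      = L / 2 * (if (i : ℕ) = j then 0 else X i j ^ 2)
        + if (i : ℕ) = j then mu / 2 * (X i j - x i) ^ 2 else 0 := by
    intro i j
    simp only [diagOffDiag, rdg, hadamard_apply, Matrix.sub_apply, of_apply, i.isLt, and_true]
    split_ifs <;> ring
  simp only [mdot, hentry, sum_add_distrib, ← mul_sum, Fin.sum_ite_val_eq hmn]
  rfl

theorem sum_offDiag_blocks_le {m n r : ℕ} (hrm : r ≤ m) (hmn : m ≤ n) {f : Fin m → Fin n → ℝ}
    (hf : ∀ i j, 0 ≤ f i j) :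
    (∑ i : Fin m, ∑ k : Fin r, if r ≤ (i : ℕ) then f i (Fin.castLE (hrm.trans hmn) k) else 0)
      + (∑ i : Fin m, ∑ k : Fin r,
          if r ≤ (i : ℕ) then f (Fin.castLE hrm k) (Fin.castLE hmn i) else 0)
      ≤ ∑ i, ∑ j, f i j := by
  have hlower : ∀ i : Fin m,
      (∑ k : Fin r, if r ≤ (i : ℕ) then f i (Fin.castLE (hrm.trans hmn) k) else 0)
        = ∑ j : Fin n, if r ≤ (i : ℕ) ∧ (j : ℕ) < r then f i j else 0 := by
    intro i
    rw [Fin.sum_castLE_of_eq_zero (hrm.trans hmn) _ fun j hj => if_neg (by omega)]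
    simp
  have hupper : (∑ i : Fin m, ∑ k : Fin r,
        if r ≤ (i : ℕ) then f (Fin.castLE hrm k) (Fin.castLE hmn i) else 0)
      ≤ ∑ i : Fin m, ∑ j : Fin n, if (i : ℕ) < r ∧ r ≤ (j : ℕ) then f i j else 0 := by
    rw [sum_comm, Fin.sum_castLE_of_eq_zero hrm _ fun i hi =>
      sum_eq_zero fun j _ => if_neg (by omega)]
    refine sum_le_sum fun k _ => le_trans (le_of_eq ?_) (Fin.sum_castLE_le hmn fun j => ?_)
    · simp
    · split_ifs
      exacts [hf _ _, le_rfl]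
  calc _ ≤ (∑ i : Fin m, ∑ j : Fin n, if r ≤ (i : ℕ) ∧ (j : ℕ) < r then f i j else 0)
        + ∑ i : Fin m, ∑ j : Fin n, if (i : ℕ) < r ∧ r ≤ (j : ℕ) then f i j else 0 := by
        rw [sum_congr rfl fun i _ => hlower i]
        exact add_le_add le_rfl hupper
    _ ≤ ∑ i, ∑ j, f i j := by
        rw [← sum_add_distrib]
        refine sum_le_sum fun i _ => ?_
        rw [← sum_add_distrib]
        refine sum_le_sum fun j _ => ?_
        split_ifs <;> first | omega | linarith [hf i j]

theorem rdg_mul_transpose_add_apply_offDiag {m n r : ℕ} (hrm : r ≤ m) (hmn : m ≤ n)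
    (s : Fin r → ℝ) (A : Matrix (Fin m) (Fin r) ℝ) (B : Matrix (Fin n) (Fin r) ℝ) (i : Fin m)
    (hi : r ≤ (i : ℕ)) (k : Fin r) :
    (rdg m r s * Bᵀ + A * (rdg n r s)ᵀ) i (Fin.castLE (hrm.trans hmn) k) = A i k * s k ∧
      (rdg m r s * Bᵀ + A * (rdg n r s)ᵀ) (Fin.castLE hrm k) (Fin.castLE hmn i)
        = s k * B (Fin.castLE hmn i) k := by
  simp only [Matrix.add_apply, rdg_transpose, rdg_mul_apply, mul_rdg_apply, Fin.val_castLE,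
    k.isLt, and_self, dite_true, transpose_apply]
  simp [show ¬(i : ℕ) < r by omega]

theorem two_mul_mul_le_of_le {g c : ℝ} (hg : 0 ≤ g) (hgc : g ≤ c) (a b : ℝ) :
    2 * g * (a * b) ≤ c * (a ^ 2 + b ^ 2) := by
  nlinarith [mul_nonneg hg (sq_nonneg (a - b)),
    mul_nonneg (sub_nonneg.2 hgc) (add_nonneg (sq_nonneg a) (sq_nonneg b))]

theorem sum_offDiag_sq_le_two_mdot_hadamard {m n r : ℕ} (hrm : r ≤ m) (hmn : m ≤ n) {mu L : ℝ}
    (hmu : 0 ≤ mu) (hL : 0 ≤ L) (s : Fin r → ℝ) (A : Matrix (Fin m) (Fin r) ℝ)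
    (B : Matrix (Fin n) (Fin r) ℝ) :
    (∑ i : Fin m, ∑ k : Fin r, if r ≤ (i : ℕ) then L * s k ^ 2 * A i k ^ 2 else 0)
      + (∑ i : Fin m, ∑ k : Fin r,
          if r ≤ (i : ℕ) then L * s k ^ 2 * B (Fin.castLE hmn i) k ^ 2 else 0)
      ≤ 2 * mdot (diagOffDiag m n (mu / 2) (L / 2) ⊙ (rdg m r s * Bᵀ + A * (rdg n r s)ᵀ))
          (rdg m r s * Bᵀ + A * (rdg n r s)ᵀ) := by
  have hentry := rdg_mul_transpose_add_apply_offDiag hrm hmn s A B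
  set D := rdg m r s * Bᵀ + A * (rdg n r s)ᵀ
  set W := diagOffDiag m n (mu / 2) (L / 2)
  have hW0 : ∀ i j, 0 ≤ W i j := fun i j => by
    simp only [W, diagOffDiag, of_apply]; split_ifs <;> positivity
  have hWoff : ∀ (i : Fin m) (j : Fin n), (i : ℕ) ≠ j → W i j = L / 2 := fun i j h => if_neg h
  have hlower : ∀ (i : Fin m) (k : Fin r),
      (if r ≤ (i : ℕ) then L * s k ^ 2 * A i k ^ 2 else 0) = 2 * if r ≤ (i : ℕ) then
        W i (Fin.castLE (hrm.trans hmn) k) * D i (Fin.castLE (hrm.trans hmn) k)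
          * D i (Fin.castLE (hrm.trans hmn) k) else 0 := by
    intro i k
    split_ifs with hi
    · rw [(hentry i hi k).1, hWoff _ _ (by simp; omega)]; ring
    · simp
  have hupper : ∀ (i : Fin m) (k : Fin r),
      (if r ≤ (i : ℕ) then L * s k ^ 2 * B (Fin.castLE hmn i) k ^ 2 else 0) =
        2 * if r ≤ (i : ℕ) then
          W (Fin.castLE hrm k) (Fin.castLE hmn i) * D (Fin.castLE hrm k) (Fin.castLE hmn i)
            * D (Fin.castLE hrm k) (Fin.castLE hmn i) else 0 := by
    intro i k
    split_ifs with hi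
    · rw [(hentry i hi k).2, hWoff _ _ (by simp; omega)]; ring
    · simp
  simp only [hlower, hupper, ← mul_sum, ← mul_add]
  gcongr
  simpa [mdot] using sum_offDiag_blocks_le hrm hmn (f := fun i j => W i j * D i j * D i j)
    fun i j => by rw [mul_assoc]; exact mul_nonneg (hW0 i j) (mul_self_nonneg _)

theorem two_mdot_rdg_mul_transpose_le {m n r : ℕ} (hrm : r ≤ m) (hmn : m ≤ n) {mu L lam : ℝ}
    (hmu : 0 ≤ mu) (hL : 0 ≤ L) (hlam : 0 ≤ lam) (s : Fin r → ℝ) {g : Fin m → ℝ}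
    (hglam : ∀ i : Fin m, (i : ℕ) < r → g i = lam) (hgpos : ∀ i : Fin m, r ≤ (i : ℕ) → 0 ≤ g i)
    (hgs : ∀ i : Fin m, r ≤ (i : ℕ) → ∀ k, g i ≤ lam + L * s k ^ 2)
    (A : Matrix (Fin m) (Fin r) ℝ) (B : Matrix (Fin n) (Fin r) ℝ) :
    2 * mdot (rdg m n g) (A * Bᵀ) ≤
      2 * mdot (diagOffDiag m n (mu / 2) (L / 2) ⊙ (rdg m r s * Bᵀ + A * (rdg n r s)ᵀ))
          (rdg m r s * Bᵀ + A * (rdg n r s)ᵀ) + lam * (mdot A A + mdot B B) := by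
  have hD := sum_offDiag_sq_le_two_mdot_hadamard hrm hmn hmu hL s A B
  set b : Fin m → Fin r → ℝ := fun i k => B (Fin.castLE hmn i) k
  have hcross : 2 * mdot (rdg m n g) (A * Bᵀ) = ∑ i, ∑ k, 2 * g i * (A i k * b i k) := by
    simp [mdot_rdg le_rfl hmn, mul_apply, mul_sum, b, mul_assoc]
  have hA : lam * mdot A A = ∑ i, ∑ k, lam * A i k ^ 2 := by simp [mdot, sq, mul_sum]
  have hB : ∑ i, ∑ k, lam * b i k ^ 2 ≤ lam * mdot B B := by
    simp only [← mul_sum, mdot]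
    refine mul_le_mul_of_nonneg_left ?_ hlam
    simpa [sq] using Fin.sum_castLE_le hmn (f := fun j => ∑ k, B j k * B j k)
      fun j => sum_nonneg fun k _ => mul_self_nonneg _
  have hpoint : ∀ i k, 2 * g i * (A i k * b i k) ≤ lam * A i k ^ 2 + lam * b i k ^ 2
      + (if r ≤ (i : ℕ) then L * s k ^ 2 * A i k ^ 2 else 0)
      + (if r ≤ (i : ℕ) then L * s k ^ 2 * b i k ^ 2 else 0) := by
    intro i k
    split_ifs with hi
    · linarith [two_mul_mul_le_of_le (hgpos i hi) (hgs i hi k) (A i k) (b i k)]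
    · have hgi := hglam i (by omega)
      linarith [two_mul_mul_le_of_le (hgi ▸ hlam) hgi.le (A i k) (b i k)]
  have hsum := sum_le_sum fun i (_ : i ∈ univ) => sum_le_sum fun k (_ : k ∈ univ) => hpoint i k
  simp only [sum_add_distrib] at hsum
  linarith

section FrobeniusCalculus

/- `fderiv` in the statement uses the product topology on matrices. It is the Frobenius-norm
topology produced by the normed-space calculus above only after unfolding definitions, so this
section works with the latter throughout and its results apply to the statement by unification. -/
@[reducible] noncomputable def frobeniusTopology {m n : ℕ} :
    TopologicalSpace (Matrix (Fin m) (Fin n) ℝ) :=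
  (frobeniusNormedAddCommGroup : NormedAddCommGroup (Matrix (Fin m) (Fin n) ℝ)).toUniformSpace
    |>.toTopologicalSpace

attribute [local instance] frobeniusTopology

variable {m n r : ℕ}

noncomputable def mdotL : Matrix (Fin m) (Fin n) ℝ →L[ℝ] Matrix (Fin m) (Fin n) ℝ →L[ℝ] ℝ :=
  LinearMap.toContinuousBilinearMap <| LinearMap.mk₂ ℝ mdot
    (fun A B C => by simp only [mdot, Matrix.add_apply, add_mul, sum_add_distrib])
    (fun c A B => by simp only [mdot, Matrix.smul_apply, smul_eq_mul, mul_sum, mul_assoc])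
    (fun A B C => by simp only [mdot, Matrix.add_apply, mul_add, sum_add_distrib])
    (fun c A B => by simp only [mdot, Matrix.smul_apply, smul_eq_mul, mul_sum, mul_left_comm])

@[simp] theorem mdotL_apply (A B : Matrix (Fin m) (Fin n) ℝ) : mdotL A B = mdot A B := rfl

noncomputable def hadamardL (W : Matrix (Fin m) (Fin n) ℝ) :
    Matrix (Fin m) (Fin n) ℝ →L[ℝ] Matrix (Fin m) (Fin n) ℝ :=
  LinearMap.toContinuousLinearMap
    { toFun := (W ⊙ ·)
      map_add' := fun X Y => hadamard_add W X Y
      map_smul' := fun c X => hadamard_smul W X c }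

@[simp] theorem hadamardL_apply (W X : Matrix (Fin m) (Fin n) ℝ) : hadamardL W X = W ⊙ X := rfl

noncomputable def mulTransposeL :
    Matrix (Fin m) (Fin r) ℝ →L[ℝ] Matrix (Fin n) (Fin r) ℝ →L[ℝ] Matrix (Fin m) (Fin n) ℝ :=
  LinearMap.toContinuousBilinearMap <|
    (mulLinearMap ℝ).compl₂ (transposeLinearEquiv (Fin n) (Fin r) ℝ ℝ).toLinearMap

@[simp] theorem mulTransposeL_apply (U : Matrix (Fin m) (Fin r) ℝ)
    (V : Matrix (Fin n) (Fin r) ℝ) : mulTransposeL U V = U * Vᵀ := rfl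

noncomputable def prodMdotL :
    (Matrix (Fin m) (Fin r) ℝ × Matrix (Fin n) (Fin r) ℝ) →L[ℝ]
      (Matrix (Fin m) (Fin r) ℝ × Matrix (Fin n) (Fin r) ℝ) →L[ℝ] ℝ :=
  mdotL.bilinearComp (.fst ℝ _ _) (.fst ℝ _ _) + mdotL.bilinearComp (.snd ℝ _ _) (.snd ℝ _ _)

@[simp] theorem prodMdotL_apply (p q : Matrix (Fin m) (Fin r) ℝ × Matrix (Fin n) (Fin r) ℝ) :
    prodMdotL p q = mdot p.1 q.1 + mdot p.2 q.2 := rfl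

theorem flip_mdotL_comp_hadamardL (W : Matrix (Fin m) (Fin n) ℝ) :
    (mdotL.comp (hadamardL W)).flip = mdotL.comp (hadamardL W) := by
  ext X Y
  simp [mdot_hadamard_comm W X]

noncomputable def lowRankObjective (W X₀ G : Matrix (Fin m) (Fin n) ℝ) (lam : ℝ)
    (p : Matrix (Fin m) (Fin r) ℝ × Matrix (Fin n) (Fin r) ℝ) : ℝ :=
  mdot (W ⊙ (p.1 * p.2ᵀ - X₀)) (p.1 * p.2ᵀ - X₀) - mdot G (p.1 * p.2ᵀ)
    + lam / 2 * (mdot p.1 p.1 + mdot p.2 p.2)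

theorem lowRankObjective_eq (W X₀ G : Matrix (Fin m) (Fin n) ℝ) (lam : ℝ) :
    lowRankObjective (r := r) W X₀ G lam = fun p =>
      (mdotL.comp (hadamardL W)) (mulTransposeL p.1 p.2 - X₀) (mulTransposeL p.1 p.2 - X₀)
        + (-mdotL G) (mulTransposeL p.1 p.2) + ((lam / 2) • prodMdotL) p p := by
  funext p
  simp [lowRankObjective, sub_eq_add_neg]

theorem fderiv_lowRankObjective_apply (W X₀ G : Matrix (Fin m) (Fin n) ℝ) (lam : ℝ)
    (p w : Matrix (Fin m) (Fin r) ℝ × Matrix (Fin n) (Fin r) ℝ) :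
    fderiv ℝ (lowRankObjective W X₀ G lam) p w =
      2 * mdot (W ⊙ (p.1 * p.2ᵀ - X₀)) (p.1 * w.2ᵀ + w.1 * p.2ᵀ)
        - mdot G (p.1 * w.2ᵀ + w.1 * p.2ᵀ) + lam * (mdot p.1 w.1 + mdot p.2 w.2) := by
  set Q := mdotL.comp (hadamardL W)
  have hchain : fderiv ℝ (lowRankObjective W X₀ G lam) p w =
      (Q (mulTransposeL p.1 p.2 - X₀) + Q.flip (mulTransposeL p.1 p.2 - X₀) + -mdotL G)
          (mulTransposeL.deriv₂ p w)
        + (((lam / 2) • prodMdotL) p w + ((lam / 2) • prodMdotL) w p) := by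
    rw [lowRankObjective_eq]
    exact fderiv_comp_bilinear_add_diag_apply _ _ (hasFDerivAt_quadratic Q _ X₀) p w
  rw [hchain, flip_mdotL_comp_hadamardL]
  simp [Q, mdot_comm w.1, mdot_comm w.2]
  ring

theorem fderiv_fderiv_lowRankObjective_apply (W X₀ G : Matrix (Fin m) (Fin n) ℝ) (lam : ℝ)
    (p w : Matrix (Fin m) (Fin r) ℝ × Matrix (Fin n) (Fin r) ℝ) :
    fderiv ℝ (fderiv ℝ (lowRankObjective W X₀ G lam)) p w w =
      2 * mdot (W ⊙ (p.1 * w.2ᵀ + w.1 * p.2ᵀ)) (p.1 * w.2ᵀ + w.1 * p.2ᵀ)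
        + 4 * mdot (W ⊙ (p.1 * p.2ᵀ - X₀)) (w.1 * w.2ᵀ) - 2 * mdot G (w.1 * w.2ᵀ)
        + lam * (mdot w.1 w.1 + mdot w.2 w.2) := by
  set Q := mdotL.comp (hadamardL W)
  have hchain : fderiv ℝ (fderiv ℝ (lowRankObjective W X₀ G lam)) p w w =
      (Q + Q.flip) (mulTransposeL.deriv₂ p w) (mulTransposeL.deriv₂ p w)
        + (Q (mulTransposeL p.1 p.2 - X₀) + Q.flip (mulTransposeL p.1 p.2 - X₀) + -mdotL G)
          (mulTransposeL.deriv₂ w w) + 2 * ((lam / 2) • prodMdotL) w w := by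
    rw [lowRankObjective_eq]
    exact fderiv_fderiv_comp_bilinear_add_diag_apply _ _ (hasFDerivAt_quadratic Q _ X₀)
      (hasFDerivAt_quadratic_deriv Q _ X₀) p w
  rw [hchain, flip_mdotL_comp_hadamardL]
  simp [Q, mdot_add_right]
  ring

theorem fderiv_lowRankObjective_rdg_eq_zero (hrm : r ≤ m) (hmn : m ≤ n)
    (W : Matrix (Fin m) (Fin n) ℝ) (s : Fin r → ℝ) {g : Fin m → ℝ} {lam : ℝ}
    (hg : ∀ k : Fin r, g (Fin.castLE hrm k) = lam) :
    fderiv ℝ (lowRankObjective W (rdg m r s * (rdg n r s)ᵀ) (rdg m n g) lam)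
      (rdg m r s, rdg n r s) = 0 := by
  have hV := rdg_mul_rdg_eq_smul hrm (hrm.trans hmn) hg s (a := m) (d := r)
  have hU := rdg_mul_rdg_eq_smul hrm hrm hg s (a := n) (d := r)
  rw [← rdg_transpose] at hU
  refine ContinuousLinearMap.ext fun w => ?_
  rw [fderiv_lowRankObjective_apply, sub_self, hadamard_zero, mdot_zero_left,
    mdot_mul_transpose_add_of_mul_eq_smul hV hU]
  simp

theorem fderiv_fderiv_lowRankObjective_rdg_nonneg (hrm : r ≤ m) (hmn : m ≤ n) {mu L lam : ℝ}
    (hmu : 0 ≤ mu) (hL : 0 ≤ L) (hlam : 0 ≤ lam) (s : Fin r → ℝ) {g : Fin m → ℝ}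
    (hglam : ∀ i : Fin m, (i : ℕ) < r → g i = lam) (hgpos : ∀ i : Fin m, r ≤ (i : ℕ) → 0 ≤ g i)
    (hgs : ∀ i : Fin m, r ≤ (i : ℕ) → ∀ k, g i ≤ lam + L * s k ^ 2)
    (w : Matrix (Fin m) (Fin r) ℝ × Matrix (Fin n) (Fin r) ℝ) :
    0 ≤ fderiv ℝ (fderiv ℝ (lowRankObjective (diagOffDiag m n (mu / 2) (L / 2))
      (rdg m r s * (rdg n r s)ᵀ) (rdg m n g) lam)) (rdg m r s, rdg n r s) w w := by
  rw [fderiv_fderiv_lowRankObjective_apply, sub_self, hadamard_zero, mdot_zero_left]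
  linarith [two_mdot_rdg_mul_transpose_le hrm hmn hmu hL hlam s hglam hgpos hgs w.1 w.2]

end FrobeniusCalculus

theorem counterexample_second_order_stationary (m n r : ℕ)
    (hr : 1 ≤ r) (hrm : r ≤ m) (hmn : m ≤ n)
    (mu L lam : ℝ) (hmu : 0 < mu) (hL : mu ≤ L) (hlam : 0 < lam)
    (x g : Fin m → ℝ)
    (hxdesc : Antitone x)
    (hxpos : ∀ i : Fin m, (i : ℕ) < r → 0 < x i)
    (hxzero : ∀ i : Fin m, r ≤ (i : ℕ) → x i = 0)
    (hglam : ∀ i : Fin m, (i : ℕ) < r → g i = lam)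
    (hgpos : ∀ i : Fin m, r ≤ (i : ℕ) → 0 ≤ g i)
    (hgub : ∀ i : Fin m, r ≤ (i : ℕ) → g i ≤ lam + L * x ⟨r - 1, by omega⟩)
    (h : Matrix (Fin m) (Fin n) ℝ → ℝ)
    (hdef : ∀ X, h X =
      L / 2 * (∑ i : Fin m, ∑ j : Fin n, if (i : ℕ) = (j : ℕ) then 0 else X i j ^ 2)
      + mu / 2 * (∑ i : Fin m, (X i ⟨(i : ℕ), lt_of_lt_of_le i.isLt hmn⟩ - x i) ^ 2)
      - mdot (rdg m n g) X)
    (Fr : Matrix (Fin m) (Fin r) ℝ × Matrix (Fin n) (Fin r) ℝ → ℝ)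
    (hFr : ∀ p, Fr p = h (p.1 * p.2ᵀ) + lam / 2 * (mdot p.1 p.1 + mdot p.2 p.2))
    (Ub : Matrix (Fin m) (Fin r) ℝ) (Vb : Matrix (Fin n) (Fin r) ℝ)
    (hU : Ub = rdg m r fun j : Fin r => Real.sqrt (x ⟨(j : ℕ), lt_of_lt_of_le j.isLt hrm⟩))
    (hV : Vb = rdg n r fun j : Fin r => Real.sqrt (x ⟨(j : ℕ), lt_of_lt_of_le j.isLt hrm⟩)) :
    fderiv ℝ Fr (Ub, Vb) = 0 ∧ ∀ w, 0 ≤ fderiv ℝ (fderiv ℝ Fr) (Ub, Vb) w w := by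
  have hL0 : 0 ≤ L := hmu.le.trans hL
  set s : Fin r → ℝ := fun j => Real.sqrt (x ⟨(j : ℕ), lt_of_lt_of_le j.isLt hrm⟩)
  have hs : ∀ k : Fin r, s k ^ 2 = x (Fin.castLE hrm k) := fun k =>
    Real.sq_sqrt (hxpos _ k.isLt).le
  have hgs : ∀ i : Fin m, r ≤ (i : ℕ) → ∀ k, g i ≤ lam + L * s k ^ 2 := fun i hi k => by
    rw [hs]
    exact (hgub i hi).trans (by gcongr; exact hxdesc (Fin.le_def.2 (by simp; omega)))
  have hUV : Ub * Vbᵀ = rdg m n x := by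
    rw [hU, hV, rdg_transpose, rdg_mul_rdg le_rfl le_rfl, ← rdg_comp_castLE hrm hxzero]
    congr 1
    funext k
    rw [Fin.castLE_rfl, id, ← sq, hs]
  have hFr' : Fr = lowRankObjective (diagOffDiag m n (mu / 2) (L / 2)) (Ub * Vbᵀ)
      (rdg m n g) lam := by
    funext p
    rw [hFr, hdef, offDiag_sq_add_diag_sq_eq hmn, hUV]
    rfl
  subst hFr' hU hV
  exact ⟨fderiv_lowRankObjective_rdg_eq_zero hrm hmn _ s fun k => hglam _ k.isLt,
    fderiv_fderiv_lowRankObjective_rdg_nonneg hrm hmn hmu.le hL0 hlam.le s hglam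
      hgpos hgs⟩
end
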